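/- arXiv:1806.07010 — 2 statements merged into one kernel-verified Lean document; each statement's English description precedes it below -/
import Mathlib

section
/- Let F be a field of characteristic zero, G a group, and S an F-subspace of F[G]. Then S is a Schur module (i.e., S is the F-span of the simple quantities of some partition of G into finite sets) if and only if S is closed under the Hadamard product and every g ∈ G lies in the support of some element of S. -/
/-- The Hadamard (coefficientwise) product on the group algebra. -/
noncomputable def hadamard {F G : Type*} [Semiring F]
    (α β : MonoidAlgebra F G) : MonoidAlgebra F G :=
  MonoidAlgebra.ofCoeff (Finsupp.zipWith (· * ·) (mul_zero 0) α.coeff β.coeff)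

/-- The simple quantity `C̄ = ∑_{g ∈ C} g` of a finite subset of `G`. -/
noncomputable def simpleQuantity (F : Type*) {G : Type*} [Semiring F] (C : Finset G) :
    MonoidAlgebra F G :=
  ∑ g ∈ C, MonoidAlgebra.single g 1

/-- A partition of `G` into finite (nonempty) classes, i.e. a partition of finite support. -/
structure FinPartition (G : Type*) where
  classes : Set (Finset G)
  nonempty : ∀ C ∈ classes, C.Nonempty
  existsUnique_mem : ∀ g : G, ∃! C, C ∈ classes ∧ g ∈ C

/-- The Schur module associated to a partition of finite support: the `F`-span of the
simple quantities of the classes. -/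
noncomputable def schurModule (F : Type*) {G : Type*} [Field F] (P : FinPartition G) :
    Submodule F (MonoidAlgebra F G) :=
  Submodule.span F (simpleQuantity F '' P.classes)

/-!
A Schur module is Hadamard closed because the Hadamard product of `C̄` and `D̄` is `C̄` or `0`
for classes `C`, `D`.
Conversely, let `S` be Hadamard closed. Applying to an `α ∈ S` coefficientwise a polynomial
without constant term stays in `S`, and by Lagrange interpolation such a polynomial can send
one nonzero value of `α` to `1` and all its other values to `0`; so every level set `C` of `α`
at a nonzero value has `C̄ ∈ S`. Since the sets `C` with `C̄ ∈ S` are closed under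
intersection, each `g` lies in a least one, and these least sets are exactly the classes of
`g ~ h ↔ ∀ β ∈ S, β g = β h`. Every element of `S` is constant on these classes, hence is
a combination of their simple quantities.
-/

open MonoidAlgebra Submodule

namespace FinPartition

variable {G : Type*}

theorem eq_of_mem (P : FinPartition G) {C D : Finset G} (hC : C ∈ P.classes)
    (hD : D ∈ P.classes) {g : G} (hgC : g ∈ C) (hgD : g ∈ D) : C = D :=
  (P.existsUnique_mem g).unique ⟨hC, hgC⟩ ⟨hD, hgD⟩

def ofClassMap (cls : G → Finset G) (mem_self : ∀ g, g ∈ cls g)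
    (eq_of_mem : ∀ g h, h ∈ cls g → cls h = cls g) : FinPartition G where
  classes := Set.range cls
  nonempty := by
    rintro _ ⟨g, rfl⟩
    exact ⟨g, mem_self g⟩
  existsUnique_mem g := by
    refine ⟨cls g, ⟨⟨g, rfl⟩, mem_self g⟩, ?_⟩
    rintro _ ⟨⟨h, rfl⟩, hgh⟩
    exact (eq_of_mem h g hgh).symm

end FinPartition

section Hadamard

variable {F G : Type*}

def IsHadamardClosed [Semiring F] (S : Submodule F (MonoidAlgebra F G)) : Prop :=
  ∀ α ∈ S, ∀ β ∈ S, hadamard α β ∈ S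

@[simp]
theorem coeff_hadamard [Semiring F] (α β : MonoidAlgebra F G) (g : G) :
    (hadamard α β).coeff g = α.coeff g * β.coeff g :=
  rfl

@[simp]
theorem coeff_simpleQuantity [Semiring F] [DecidableEq G] (C : Finset G) (g : G) :
    (simpleQuantity F C).coeff g = if g ∈ C then 1 else 0 := by
  simp [simpleQuantity, coeff_sum, Finsupp.finsetSum_apply, Finsupp.single_apply]

theorem hadamard_simpleQuantity [Semiring F] [DecidableEq G] (C D : Finset G) :
    hadamard (simpleQuantity F C) (simpleQuantity F D) = simpleQuantity F (C ∩ D) := by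
  ext g
  simp only [coeff_hadamard, coeff_simpleQuantity, Finset.mem_inter]
  split_ifs <;> simp_all

variable (F G) in
noncomputable def hadamardBilin [CommSemiring F] :
    MonoidAlgebra F G →ₗ[F] MonoidAlgebra F G →ₗ[F] MonoidAlgebra F G :=
  LinearMap.mk₂ F hadamard
    (fun _ _ _ => by ext; simp [add_mul])
    (fun _ _ _ => by ext; simp [mul_assoc])
    (fun _ _ _ => by ext; simp [mul_add])
    (fun _ _ _ => by ext; simp [mul_left_comm])

theorem hadamard_mem_span_of_forall [CommSemiring F] {s : Set (MonoidAlgebra F G)}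
    (hs : ∀ a ∈ s, ∀ b ∈ s, hadamard a b ∈ span F s) {α β : MonoidAlgebra F G}
    (hα : α ∈ span F s) (hβ : β ∈ span F s) : hadamard α β ∈ span F s := by
  have hle : map₂ (hadamardBilin F G) (span F s) (span F s) ≤ span F s := by
    rw [map₂_span_span, span_le]
    rintro _ ⟨a, ha, b, hb, rfl⟩
    exact hs a ha b hb
  exact hle (apply_mem_map₂ _ hα hβ)

end Hadamard

section SchurModule

variable {F G : Type*} [Field F] (P : FinPartition G)

theorem simpleQuantity_mem_schurModule {C : Finset G} (hC : C ∈ P.classes) :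
    simpleQuantity F C ∈ schurModule F P :=
  subset_span ⟨C, hC, rfl⟩

theorem isHadamardClosed_schurModule : IsHadamardClosed (schurModule F P) := by
  classical
  refine fun α hα β hβ => hadamard_mem_span_of_forall ?_ hα hβ
  rintro _ ⟨C, hC, rfl⟩ _ ⟨D, hD, rfl⟩
  rw [hadamard_simpleQuantity]
  by_cases hCD : C = D
  · rw [hCD, Finset.inter_self]
    exact simpleQuantity_mem_schurModule P hD
  · have hempty : C ∩ D = ∅ := Finset.eq_empty_of_forall_notMem fun g hg =>
      hCD (P.eq_of_mem hC hD (Finset.mem_inter.1 hg).1 (Finset.mem_inter.1 hg).2)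
    simp [hempty, simpleQuantity]

theorem exists_mem_schurModule_mem_support (g : G) :
    ∃ α ∈ schurModule F P, g ∈ α.coeff.support := by
  classical
  obtain ⟨C, ⟨hC, hgC⟩, -⟩ := P.existsUnique_mem g
  exact ⟨simpleQuantity F C, simpleQuantity_mem_schurModule P hC, by simp [hgC]⟩

theorem mem_schurModule_of_coeff_eq {α : MonoidAlgebra F G}
    (hα : ∀ C ∈ P.classes, ∀ g ∈ C, ∀ h ∈ C, α.coeff h = α.coeff g) :
    α ∈ schurModule F P := by
  classical
  induction hn : α.coeff.support.card using Nat.strong_induction_on generalizing α with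
  | _ n ih =>
  obtain hzero | ⟨g, hg⟩ := α.coeff.support.eq_empty_or_nonempty
  · rw [coeff_eq_zero.1 (Finsupp.support_eq_empty.1 hzero)]
    exact zero_mem _
  obtain ⟨C, ⟨hC, hgC⟩, -⟩ := P.existsUnique_mem g
  set α' := α - α.coeff g • simpleQuantity F C
  have hα'_coeff : ∀ h, α'.coeff h = if h ∈ C then 0 else α.coeff h := fun h => by
    by_cases hh : h ∈ C <;> simp [α', MonoidAlgebra.coeff_sub, hh, hα C hC g hgC h]
  have hα'_support : α'.coeff.support ⊂ α.coeff.support := by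
    refine ⟨fun h hh => ?_, fun hsub => ?_⟩
    · simp only [Finsupp.mem_support_iff, hα'_coeff] at hh ⊢
      split_ifs at hh
      · exact absurd rfl hh
      · exact hh
    · simpa [hα'_coeff, hgC] using hsub hg
  have hα'_mem : α' ∈ schurModule F P := by
    refine ih _ (hn ▸ Finset.card_lt_card hα'_support) (fun D hD k hk h hh => ?_) rfl
    by_cases hDC : D = C
    · simp [hα'_coeff, hDC ▸ hk, hDC ▸ hh]
    · have hnot : ∀ x ∈ D, x ∉ C := fun x hx hxC => hDC (P.eq_of_mem hD hC hx hxC)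
      simp [hα'_coeff, hnot k hk, hnot h hh, hα D hD k hk h hh]
  have hα_eq : α = α' + α.coeff g • simpleQuantity F C := by simp [α']
  rw [hα_eq]
  exact add_mem hα'_mem (smul_mem _ _ (simpleQuantity_mem_schurModule P hC))

end SchurModule

section HadamardClosed

variable {F G : Type*} [Field F] {S : Submodule F (MonoidAlgebra F G)} {α : MonoidAlgebra F G}

theorem ofCoeff_mapRange_pow_mem (hS : IsHadamardClosed S) (hα : α ∈ S)
    (n : ℕ) : ofCoeff (α.coeff.mapRange (· ^ (n + 1)) (zero_pow n.succ_ne_zero)) ∈ S := by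
  induction n with
  | zero =>
    convert hα
    ext g
    simp
  | succ n ih =>
    convert hS _ ih _ hα using 1
    ext g
    simp [pow_succ]

theorem ofCoeff_mapRange_eval_mem (hS : IsHadamardClosed S) (hα : α ∈ S)
    (p : Polynomial F) (hp : p.eval 0 = 0) : ofCoeff (α.coeff.mapRange p.eval hp) ∈ S := by
  have hp0 : p.coeff 0 = 0 := by rwa [Polynomial.coeff_zero_eq_eval_zero]
  have hsum : ofCoeff (α.coeff.mapRange p.eval hp) = ∑ i ∈ Finset.range p.natDegree,
      p.coeff (i + 1) • ofCoeff (α.coeff.mapRange (· ^ (i + 1)) (zero_pow i.succ_ne_zero)) := by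
    ext g
    simp only [Finsupp.mapRange_apply, MonoidAlgebra.coeff_sum,
      Finsupp.finsetSum_apply, MonoidAlgebra.coeff_smul_apply, smul_eq_mul]
    rw [Polynomial.eval_eq_sum_range, Finset.sum_range_succ']
    simp [hp0]
  rw [hsum]
  exact sum_mem fun i _ => smul_mem _ _ (ofCoeff_mapRange_pow_mem hS hα i)

/-- Interpolating `f` on the finitely many values of `α` reduces this to polynomials. -/
theorem ofCoeff_mapRange_mem (hS : IsHadamardClosed S) (hα : α ∈ S)
    (f : F → F) (hf : f 0 = 0) : ofCoeff (α.coeff.mapRange f hf) ∈ S := by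
  classical
  set values := insert 0 (α.coeff.support.image α.coeff)
  set p := Lagrange.interpolate values id f
  have hp : ∀ x ∈ values, p.eval x = f x := fun x hx =>
    Lagrange.eval_interpolate_at_node f Function.injective_id.injOn hx
  have hvalues : ∀ g, α.coeff g ∈ values := fun g => by
    by_cases hg : α.coeff g = 0
    · simp [values, hg]
    · exact Finset.mem_insert_of_mem (Finset.mem_image_of_mem _ (Finsupp.mem_support_iff.2 hg))
  have hp0 : p.eval 0 = 0 := (hp 0 (Finset.mem_insert_self _ _)).trans hf
  convert ofCoeff_mapRange_eval_mem hS hα p hp0 using 2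
  ext g
  simp [hp _ (hvalues g)]

theorem simpleQuantity_levelSet_mem [DecidableEq F] (hS : IsHadamardClosed S)
    (hα : α ∈ S) {c : F} (hc : c ≠ 0) :
    simpleQuantity F {g ∈ α.coeff.support | α.coeff g = c} ∈ S := by
  classical
  convert ofCoeff_mapRange_mem hS hα (fun x => if x = c then 1 else 0) (by simp [hc.symm])
  ext g
  by_cases hg : α.coeff g = c <;> simp [hg, hc]

theorem exists_least_simpleQuantity_mem
    (hS : IsHadamardClosed S) (hcover : ∀ g : G, ∃ α ∈ S, g ∈ α.coeff.support)
    (g : G) : ∃ C : Finset G, g ∈ C ∧ simpleQuantity F C ∈ S ∧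
      ∀ D : Finset G, g ∈ D → simpleQuantity F D ∈ S → C ⊆ D := by
  classical
  obtain ⟨α, hα, hg⟩ := hcover g
  have hlevel : g ∈ {k ∈ α.coeff.support | α.coeff k = α.coeff g} ∧
      simpleQuantity F {k ∈ α.coeff.support | α.coeff k = α.coeff g} ∈ S :=
    ⟨by simpa using hg, simpleQuantity_levelSet_mem hS hα (Finsupp.mem_support_iff.1 hg)⟩
  obtain ⟨C, hmin⟩ := exists_minimal_of_wellFoundedLT
    (fun C : Finset G => g ∈ C ∧ simpleQuantity F C ∈ S) ⟨_, hlevel⟩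
  obtain ⟨hgC, hCS⟩ := hmin.1
  refine ⟨C, hgC, hCS, fun D hgD hDS => ?_⟩
  have hCD : g ∈ C ∩ D ∧ simpleQuantity F (C ∩ D) ∈ S :=
    ⟨Finset.mem_inter.2 ⟨hgC, hgD⟩, hadamard_simpleQuantity (F := F) C D ▸ hS _ hCS _ hDS⟩
  exact (hmin.le_of_le hCD Finset.inter_subset_left).trans Finset.inter_subset_right

/-- Shifting `β` by a multiple of `C̄` makes its value at `g` equal to `1`; the level set of
that value is then a set through `g` whose simple quantity is in `S`, so it contains `C`. -/
theorem mem_iff_forall_coeff_eq_of_least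
    (hS : IsHadamardClosed S) {g : G} {C : Finset G} (hgC : g ∈ C)
    (hCS : simpleQuantity F C ∈ S)
    (hleast : ∀ D : Finset G, g ∈ D → simpleQuantity F D ∈ S → C ⊆ D) (h : G) :
    h ∈ C ↔ ∀ β ∈ S, β.coeff h = β.coeff g := by
  classical
  refine ⟨fun hhC β hβ => ?_, fun hall => ?_⟩
  · set δ := β + (1 - β.coeff g) • simpleQuantity F C
    have hδ : ∀ k ∈ C, δ.coeff k = β.coeff k + 1 - β.coeff g := fun k hk => by
      simp [δ, hk]; ring
    have hδg : δ.coeff g = 1 := by rw [hδ g hgC]; ring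
    have hsub := hleast {k ∈ δ.coeff.support | δ.coeff k = 1} (by simp [hδg])
      (simpleQuantity_levelSet_mem hS (add_mem hβ (smul_mem _ _ hCS)) one_ne_zero)
    have hδh : δ.coeff h = 1 := (Finset.mem_filter.1 (hsub hhC)).2
    linear_combination hδh - hδ h hhC
  · by_contra hhC
    simpa [hgC, hhC] using hall _ hCS

theorem exists_eq_schurModule (hS : IsHadamardClosed S)
    (hcover : ∀ g : G, ∃ α ∈ S, g ∈ α.coeff.support) :
    ∃ P : FinPartition G, S = schurModule F P := by
  classical
  choose cls mem_cls cls_mem least using exists_least_simpleQuantity_mem hS hcover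
  have mem_cls_iff : ∀ g h, h ∈ cls g ↔ ∀ β ∈ S, β.coeff h = β.coeff g := fun g =>
    mem_iff_forall_coeff_eq_of_least hS (mem_cls g) (cls_mem g) (least g)
  let P := FinPartition.ofClassMap cls mem_cls fun g h hh => by
    ext k
    simp only [mem_cls_iff]
    exact forall₂_congr fun β hβ => by rw [(mem_cls_iff g h).1 hh β hβ]
  refine ⟨P, le_antisymm (fun α hα => mem_schurModule_of_coeff_eq P ?_) (span_le.2 ?_)⟩
  · rintro _ ⟨g, rfl⟩ h hh k hk
    rw [(mem_cls_iff g h).1 hh α hα, (mem_cls_iff g k).1 hk α hα]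
  · rintro _ ⟨_, ⟨g, rfl⟩, rfl⟩
    exact cls_mem g

end HadamardClosed

theorem stmt7_general {F G : Type*} [Field F]
    (S : Submodule F (MonoidAlgebra F G)) :
    (∃ P : FinPartition G, S = schurModule F P) ↔
      ((∀ α ∈ S, ∀ β ∈ S, hadamard α β ∈ S) ∧
        ∀ g : G, ∃ α ∈ S, g ∈ α.coeff.support) := by
  refine ⟨?_, fun ⟨hS, hcover⟩ => exists_eq_schurModule hS hcover⟩
  rintro ⟨P, rfl⟩
  exact ⟨isHadamardClosed_schurModule P, exists_mem_schurModule_mem_support P⟩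

theorem stmt7 {F G : Type*} [Field F] [CharZero F] [Group G]
    (S : Submodule F (MonoidAlgebra F G)) :
    (∃ P : FinPartition G, S = schurModule F P) ↔
      ((∀ α ∈ S, ∀ β ∈ S, hadamard α β ∈ S) ∧
        ∀ g : G, ∃ α ∈ S, g ∈ α.coeff.support) :=
  stmt7_general S
end

section
/- Let S be a Schur ring over a group G and let α ∈ S. Then the subgroup H = ⟨supp(α)⟩ generated by the support of α is an S-subgroup of G. -/
/-- A Schur ring over a group `G` with coefficients in `F`, given by its partition
of finite support: `{1}` is a class, classes are closed under inversion, and the product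
of two simple quantities is a finite `F`-linear combination of simple quantities. -/
structure SchurRing (F G : Type*) [Field F] [Group G] extends FinPartition G where
  one_mem : ({1} : Finset G) ∈ classes
  inv_mem : ∀ C ∈ classes, ∃ D ∈ classes, ∀ g : G, g ∈ D ↔ g⁻¹ ∈ C
  mul_mem : ∀ C ∈ classes, ∀ D ∈ classes,
    simpleQuantity F C * simpleQuantity F D ∈
      Submodule.span F (simpleQuantity F '' classes)

/-- The underlying Schur ring, as a submodule of the group algebra. -/
noncomputable def SchurRing.carrier {F G : Type*} [Field F] [Group G] (S : SchurRing F G) :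
    Submodule F (MonoidAlgebra F G) :=
  schurModule F S.toFinPartition

/-- A subset of `G` is an `S`-set if it is a union of classes of the partition. -/
def IsSSet {F G : Type*} [Field F] [Group G] (S : SchurRing F G) (X : Set G) : Prop :=
  ∃ E ⊆ S.classes, X = ⋃ C ∈ E, (C : Set G)

/-- The group ring `F[H]` of a subgroup, viewed inside `F[G]`. -/
noncomputable def groupRingOf (F : Type*) {G : Type*} [Field F] [Group G] (H : Subgroup G) :
    Submodule F (MonoidAlgebra F G) :=
  Submodule.span F ((fun g => (MonoidAlgebra.single g 1 : MonoidAlgebra F G)) '' (H : Set G))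

/-!
Elements of a Schur ring are constant on the classes, so the support of `α` is a union of
classes. Call a set saturated if it contains every class it meets; saturation passes from a set
to the subgroup it generates. Indeed the class of `1` is `{1}`, the class of `x⁻¹` consists of
the inverses of the class of `x`, and the class of `x * y` lies in `Cₓ * C_y`: the coefficient of
`g` in `C̄ₓ * C̄_y` counts the factorisations `g = c * d`, so in characteristic zero it is nonzero
exactly on `Cₓ * C_y`, and it is constant on classes because `C̄ₓ * C̄_y ∈ S`.
-/

open Pointwise

namespace FinPartition

variable {G : Type*} (P : FinPartition G)

theorem eq_of_mem_of_mem {C D : Finset G} (hC : C ∈ P.classes) (hD : D ∈ P.classes) {g : G}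
    (hgC : g ∈ C) (hgD : g ∈ D) : C = D :=
  (P.existsUnique_mem g).unique ⟨hC, hgC⟩ ⟨hD, hgD⟩

theorem exists_mem (g : G) : ∃ C ∈ P.classes, g ∈ C :=
  (P.existsUnique_mem g).exists

def IsSaturated (X : Set G) : Prop :=
  ∀ C ∈ P.classes, ∀ g ∈ C, g ∈ X → (C : Set G) ⊆ X

end FinPartition

theorem isSSet_of_isSaturated {F G : Type*} [Field F] [Group G] (S : SchurRing F G) {X : Set G}
    (hX : S.IsSaturated X) : IsSSet S X := by
  refine ⟨{C ∈ S.classes | (C : Set G) ⊆ X}, fun C hC => hC.1, ?_⟩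
  ext g
  simp only [Set.mem_iUnion, Set.mem_ofPred_eq, exists_prop]
  constructor
  · intro hg
    obtain ⟨C, hC, hgC⟩ := S.exists_mem g
    exact ⟨C, ⟨hC, hX C hC g hgC hg⟩, hgC⟩
  · rintro ⟨C, ⟨-, hCX⟩, hgC⟩
    exact hCX hgC

theorem simpleQuantity_coeff {F G : Type*} [Semiring F] [DecidableEq G] (C : Finset G) (g : G) :
    (simpleQuantity F C).coeff g = if g ∈ C then 1 else 0 := by
  rw [simpleQuantity, MonoidAlgebra.coeff_sum, Finsupp.finsetSum_apply]
  simp [MonoidAlgebra.coeff_single, Finsupp.single_apply]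

theorem coeff_eq_of_mem_schurModule {F G : Type*} [Field F] {P : FinPartition G}
    {β : MonoidAlgebra F G} (hβ : β ∈ schurModule F P) {C : Finset G} (hC : C ∈ P.classes)
    {g h : G} (hg : g ∈ C) (hh : h ∈ C) : β.coeff g = β.coeff h := by
  classical
  induction hβ using Submodule.span_induction with
  | mem x hx =>
    obtain ⟨D, hD, rfl⟩ := hx
    have hgh : g ∈ D ↔ h ∈ D :=
      ⟨fun hgD => P.eq_of_mem_of_mem hC hD hg hgD ▸ hh,
        fun hhD => P.eq_of_mem_of_mem hC hD hh hhD ▸ hg⟩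
    simp only [simpleQuantity_coeff, hgh]
  | zero => simp
  | add x y _ _ ihx ihy => simp only [MonoidAlgebra.coeff_add, Finsupp.add_apply, ihx, ihy]
  | smul c x _ ih => simp only [MonoidAlgebra.coeff_smul, Finsupp.smul_apply, ih]

theorem isSaturated_support {F G : Type*} [Field F] {P : FinPartition G}
    {β : MonoidAlgebra F G} (hβ : β ∈ schurModule F P) :
    P.IsSaturated (β.coeff.support : Set G) := by
  intro C hC g hgC hg h hhC
  rw [Finset.mem_coe, Finsupp.mem_support_iff] at hg ⊢
  rwa [coeff_eq_of_mem_schurModule hβ hC hhC hgC]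

theorem simpleQuantity_mul_simpleQuantity_coeff {F G : Type*} [Semiring F] [Mul G]
    [DecidableEq G] (C D : Finset G) (g : G) :
    (simpleQuantity F C * simpleQuantity F D).coeff g =
      ((C ×ˢ D).filter (fun p => p.1 * p.2 = g)).card := by
  rw [simpleQuantity, simpleQuantity, Finset.sum_mul_sum, ← Finset.sum_product',
    Finset.natCast_card_filter, MonoidAlgebra.coeff_sum, Finsupp.finsetSum_apply]
  refine Finset.sum_congr rfl fun p _ => ?_
  simp [MonoidAlgebra.single_mul_single, MonoidAlgebra.coeff_single, Finsupp.single_apply]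

theorem simpleQuantity_mul_simpleQuantity_coeff_ne_zero_iff {F G : Type*} [Semiring F]
    [CharZero F] [Mul G] (C D : Finset G) (g : G) :
    (simpleQuantity F C * simpleQuantity F D).coeff g ≠ 0 ↔ g ∈ (C : Set G) * D := by
  classical
  rw [simpleQuantity_mul_simpleQuantity_coeff, Nat.cast_ne_zero, Finset.card_ne_zero,
    Finset.filter_nonempty_iff, Set.mem_mul]
  simp [and_assoc]

namespace SchurRing

variable {F G : Type*} [Field F] [Group G] (S : SchurRing F G)

theorem eq_singleton_one {C : Finset G} (hC : C ∈ S.classes) (h1 : (1 : G) ∈ C) : C = {1} :=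
  S.eq_of_mem_of_mem hC S.one_mem h1 (Finset.mem_singleton_self 1)

theorem inv_mem_of_mem_inv {C D : Finset G} (hC : C ∈ S.classes) (hD : D ∈ S.classes) {x : G}
    (hxC : x ∈ C) (hxD : x⁻¹ ∈ D) {z : G} (hz : z ∈ D) : z⁻¹ ∈ C := by
  obtain ⟨E, hE, hEC⟩ := S.inv_mem C hC
  have hDE : D = E := S.eq_of_mem_of_mem hD hE hxD ((hEC _).mpr (by rwa [inv_inv]))
  exact (hEC z).mp (hDE ▸ hz)

theorem subset_mul_of_mul_mem [CharZero F] {Cx Cy C : Finset G} (hCx : Cx ∈ S.classes)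
    (hCy : Cy ∈ S.classes) (hC : C ∈ S.classes) {x y : G} (hx : x ∈ Cx) (hy : y ∈ Cy)
    (hxy : x * y ∈ C) : (C : Set G) ⊆ (Cx : Set G) * Cy := by
  intro z hz
  have hprod := S.mul_mem Cx hCx Cy hCy
  rw [← simpleQuantity_mul_simpleQuantity_coeff_ne_zero_iff (F := F),
    coeff_eq_of_mem_schurModule hprod hC hz hxy,
    simpleQuantity_mul_simpleQuantity_coeff_ne_zero_iff]
  exact Set.mul_mem_mul hx hy

theorem isSaturated_closure [CharZero F] {X : Set G} (hX : S.IsSaturated X) :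
    S.IsSaturated (Subgroup.closure X : Set G) := by
  intro C hC g hgC hg
  induction hg using Subgroup.closure_induction generalizing C with
  | mem x hx => exact (hX C hC x hgC hx).trans Subgroup.subset_closure
  | one =>
    rw [S.eq_singleton_one hC hgC, Finset.coe_singleton, Set.singleton_subset_iff]
    exact (Subgroup.closure X).one_mem
  | mul x y _ _ ihx ihy =>
    obtain ⟨Cx, hCx, hxCx⟩ := S.exists_mem x
    obtain ⟨Cy, hCy, hyCy⟩ := S.exists_mem y
    refine (S.subset_mul_of_mul_mem hCx hCy hC hxCx hyCy hgC).trans ?_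
    rintro _ ⟨c, hc, d, hd, rfl⟩
    exact Subgroup.mul_mem _ (ihx Cx hCx hxCx hc) (ihy Cy hCy hyCy hd)
  | inv x _ ihx =>
    obtain ⟨Cx, hCx, hxCx⟩ := S.exists_mem x
    intro z hz
    simpa using Subgroup.inv_mem _ (ihx Cx hCx hxCx (S.inv_mem_of_mem_inv hCx hC hxCx hgC hz))

end SchurRing

theorem stmt9 {F G : Type*} [Field F] [CharZero F] [Group G]
    (S : SchurRing F G) (α : MonoidAlgebra F G) (hα : α ∈ S.carrier) :
    IsSSet S ((Subgroup.closure (α.coeff.support : Set G) : Subgroup G) : Set G) :=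
  isSSet_of_isSaturated S (S.isSaturated_closure (isSaturated_support hα))
end
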